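/- Let n ≥ 1 be a natural number, let U be a punctured open neighborhood of 0 in ℂ, let z : U → ℂ be three times differentiable with z'(ζ) ≠ 0 for all ζ ∈ U, and let α ∈ ℂ be such that ζ²·S(z)(ζ) tends to α as ζ → 0 through nonzero values. Then η²·S(z∘(η ↦ ηⁿ))(η) tends to 1 − n²·(1 − α) as η → 0 through nonzero values (the composite being defined on a punctured neighborhood of 0). -/

import Mathlib

/-- The Schwarzian derivative `S(z) = (2 z' z''' - 3 (z'')²)/(z')²`. -/
noncomputable def schwarzian (z : ℂ → ℂ) : ℂ → ℂ := fun t =>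
  (2 * deriv z t * deriv (deriv (deriv z)) t - 3 * (deriv (deriv z) t) ^ 2)
    / (deriv z t) ^ 2

/-!
The Schwarzian satisfies the chain rule `S(f ∘ g) = (S f ∘ g) · g'² + S g`, and with the
normalization used here `S(ηⁿ) = (1 - n²)/η²`. Hence
`η² S(z ∘ (·ⁿ))(η) = n² · (ηⁿ)² S z(ηⁿ) + 1 - n²`, and `ηⁿ → 0` through nonzero values.
-/

open Filter Topology

section ChainRule

variable {𝕜 : Type*} [NontriviallyNormedField 𝕜] {f g : 𝕜 → 𝕜} {x : 𝕜}

theorem deriv_comp_eventuallyEq (hf : ∀ᶠ y in 𝓝 x, DifferentiableAt 𝕜 f (g y))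
    (hg : ∀ᶠ y in 𝓝 x, DifferentiableAt 𝕜 g y) :
    deriv (f ∘ g) =ᶠ[𝓝 x] fun y => deriv f (g y) * deriv g y := by
  filter_upwards [hf, hg] with y hfy hgy
  exact deriv_comp y hfy hgy

theorem deriv_deriv_comp (hf : ∀ᶠ y in 𝓝 x, DifferentiableAt 𝕜 f (g y))
    (hg : ∀ᶠ y in 𝓝 x, DifferentiableAt 𝕜 g y) (hf' : DifferentiableAt 𝕜 (deriv f) (g x))
    (hg' : DifferentiableAt 𝕜 (deriv g) x) :
    deriv (deriv (f ∘ g)) x =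
      deriv (deriv f) (g x) * deriv g x ^ 2 + deriv f (g x) * deriv (deriv g) x := by
  rw [(deriv_comp_eventuallyEq hf hg).deriv_eq]
  exact ((hf'.hasDerivAt.comp x hg.self_of_nhds.hasDerivAt).mul hg'.hasDerivAt).deriv.trans
    (by simp only [Function.comp_apply]; ring)

theorem deriv_deriv_comp_eventuallyEq (hf : ∀ᶠ y in 𝓝 x, DifferentiableAt 𝕜 f (g y))
    (hg : ∀ᶠ y in 𝓝 x, DifferentiableAt 𝕜 g y)
    (hf' : ∀ᶠ y in 𝓝 x, DifferentiableAt 𝕜 (deriv f) (g y))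
    (hg' : ∀ᶠ y in 𝓝 x, DifferentiableAt 𝕜 (deriv g) y) :
    deriv (deriv (f ∘ g)) =ᶠ[𝓝 x] fun y =>
      deriv (deriv f) (g y) * deriv g y ^ 2 + deriv f (g y) * deriv (deriv g) y := by
  filter_upwards [hf.eventually_nhds, hg.eventually_nhds, hf', hg'] with y hfy hgy hf'y hg'y
  exact deriv_deriv_comp hfy hgy hf'y hg'y

theorem deriv_deriv_deriv_comp (hf : ∀ᶠ y in 𝓝 x, DifferentiableAt 𝕜 f (g y))
    (hg : ∀ᶠ y in 𝓝 x, DifferentiableAt 𝕜 g y)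
    (hf' : ∀ᶠ y in 𝓝 x, DifferentiableAt 𝕜 (deriv f) (g y))
    (hg' : ∀ᶠ y in 𝓝 x, DifferentiableAt 𝕜 (deriv g) y)
    (hf'' : DifferentiableAt 𝕜 (deriv (deriv f)) (g x))
    (hg'' : DifferentiableAt 𝕜 (deriv (deriv g)) x) :
    deriv (deriv (deriv (f ∘ g))) x =
      deriv (deriv (deriv f)) (g x) * deriv g x ^ 3
        + 3 * deriv (deriv f) (g x) * deriv g x * deriv (deriv g) x
        + deriv f (g x) * deriv (deriv (deriv g)) x := by
  have hgx := hg.self_of_nhds.hasDerivAt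
  have hg'x := hg'.self_of_nhds.hasDerivAt
  rw [(deriv_deriv_comp_eventuallyEq hf hg hf' hg').deriv_eq]
  exact (((hf''.hasDerivAt.comp x hgx).mul (hg'x.pow 2)).add
    ((hf'.self_of_nhds.hasDerivAt.comp x hgx).mul hg''.hasDerivAt)).deriv.trans
      (by simp only [Function.comp_apply, Pi.pow_apply]; ring)

end ChainRule

theorem schwarzian_comp {f g : ℂ → ℂ} {x : ℂ} (hf : ∀ᶠ y in 𝓝 x, DifferentiableAt ℂ f (g y))
    (hg : ∀ᶠ y in 𝓝 x, DifferentiableAt ℂ g y)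
    (hf' : ∀ᶠ y in 𝓝 x, DifferentiableAt ℂ (deriv f) (g y))
    (hg' : ∀ᶠ y in 𝓝 x, DifferentiableAt ℂ (deriv g) y)
    (hf'' : DifferentiableAt ℂ (deriv (deriv f)) (g x))
    (hg'' : DifferentiableAt ℂ (deriv (deriv g)) x)
    (hfx : deriv f (g x) ≠ 0) (hgx : deriv g x ≠ 0) :
    schwarzian (f ∘ g) x = schwarzian f (g x) * deriv g x ^ 2 + schwarzian g x := by
  simp only [schwarzian]
  rw [deriv_comp x hf.self_of_nhds hg.self_of_nhds, deriv_deriv_comp hf hg hf'.self_of_nhds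
    hg'.self_of_nhds, deriv_deriv_deriv_comp hf hg hf' hg' hf'' hg'']
  field_simp
  ring

theorem schwarzian_zpow {m : ℤ} (hm : m ≠ 0) {x : ℂ} (hx : x ≠ 0) :
    schwarzian (fun y => y ^ m) x = (1 - m ^ 2) / x ^ 2 := by
  have h1 := iter_deriv_zpow (𝕜 := ℂ) m x 1
  have h2 := iter_deriv_zpow (𝕜 := ℂ) m x 2
  have h3 := iter_deriv_zpow (𝕜 := ℂ) m x 3
  simp only [Function.iterate_succ, Function.iterate_zero, Function.comp_apply, id,
    Finset.prod_range_succ, Finset.prod_range_zero] at h1 h2 h3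
  have hm' : (m : ℂ) ≠ 0 := by exact_mod_cast hm
  have hxm : x ^ m ≠ 0 := zpow_ne_zero m hx
  simp only [schwarzian, h1, h2, h3, Nat.cast_zero, Nat.cast_one, Nat.cast_ofNat, sub_zero,
    one_mul, zpow_sub₀ hx, zpow_ofNat]
  field_simp
  ring

theorem schwarzian_pow {n : ℕ} (hn : n ≠ 0) {x : ℂ} (hx : x ≠ 0) :
    schwarzian (fun y => y ^ n) x = (1 - n ^ 2) / x ^ 2 := by
  simpa using schwarzian_zpow (m := n) (by exact_mod_cast hn) hx

theorem tendsto_pow_nhdsNE_zero {n : ℕ} (hn : n ≠ 0) :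
    Tendsto (fun η : ℂ => η ^ n) (𝓝[≠] 0) (𝓝[≠] 0) := by
  refine tendsto_nhdsWithin_iff.mpr ⟨?_, ?_⟩
  · exact ((continuous_pow n).tendsto' 0 0 (zero_pow hn)).mono_left nhdsWithin_le_nhds
  · filter_upwards [self_mem_nhdsWithin] with η hη
    exact pow_ne_zero n hη

theorem sq_mul_schwarzian_comp_pow {n : ℕ} (hn : n ≠ 0) {f : ℂ → ℂ} {η : ℂ} (hη : η ≠ 0)
    (hf : ∀ᶠ y in 𝓝 (η ^ n), DifferentiableAt ℂ f y)
    (hf' : ∀ᶠ y in 𝓝 (η ^ n), DifferentiableAt ℂ (deriv f) y)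
    (hf'' : DifferentiableAt ℂ (deriv (deriv f)) (η ^ n)) (hfη : deriv f (η ^ n) ≠ 0) :
    η ^ 2 * schwarzian (fun y => f (y ^ n)) η =
      n ^ 2 * ((η ^ n) ^ 2 * schwarzian f (η ^ n)) + (1 - n ^ 2) := by
  have hpow (k : ℕ) : Differentiable ℂ (deriv^[k] fun y : ℂ => y ^ n) :=
    ((contDiff_id.pow n).iterate_deriv k).differentiable (by simp)
  have hderiv : deriv (fun y => y ^ n) η = n * η ^ (n - 1) := (hasDerivAt_pow n η).deriv
  have hderiv_ne : deriv (fun y => y ^ n) η ≠ 0 := by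
    rw [hderiv]; exact mul_ne_zero (by exact_mod_cast hn) (pow_ne_zero _ hη)
  have hcont := (continuous_pow n).tendsto η
  rw [← Function.comp_def, schwarzian_comp (hcont.eventually hf) (.of_forall (hpow 0))
    (hcont.eventually hf') (.of_forall (hpow 1)) hf'' (hpow 2 η) hfη hderiv_ne,
    schwarzian_pow hn hη, hderiv]
  field_simp
  -- `(η ^ (n - 1) * η) ^ 2 = (η ^ n) ^ 2`
  linear_combination (n : ℂ) ^ 2 * schwarzian f (η ^ n) * (η ^ (n - 1) * η + η ^ n) *
    pow_sub_one_mul hn η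

theorem schwarzian_residue_pullback_pow (n : ℕ) (hn : 1 ≤ n)
    (U : Set ℂ) (hUopen : IsOpen U)
    (hUnbhd : U ∪ {0} ∈ nhds (0 : ℂ))
    (z : ℂ → ℂ)
    (hz1 : ∀ ζ ∈ U, DifferentiableAt ℂ z ζ)
    (hz2 : ∀ ζ ∈ U, DifferentiableAt ℂ (deriv z) ζ)
    (hz3 : ∀ ζ ∈ U, DifferentiableAt ℂ (deriv (deriv z)) ζ)
    (hz' : ∀ ζ ∈ U, deriv z ζ ≠ 0)
    (α : ℂ)
    (hlim : Filter.Tendsto (fun ζ : ℂ => ζ ^ 2 * schwarzian z ζ)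
      (nhdsWithin 0 {(0 : ℂ)}ᶜ) (nhds α)) :
    Filter.Tendsto (fun η : ℂ => η ^ 2 * schwarzian (fun η' => z (η' ^ n)) η)
      (nhdsWithin 0 {(0 : ℂ)}ᶜ) (nhds (1 - (n : ℂ) ^ 2 * (1 - α))) := by
  have hn0 : n ≠ 0 := by omega
  have hU : ∀ᶠ η in 𝓝[≠] 0, η ^ n ∈ U :=
    tendsto_pow_nhdsNE_zero hn0 <| mem_nhdsWithin_iff_exists_mem_nhds_inter.mpr
      ⟨_, hUnbhd, fun ζ ⟨hζ, hζ0⟩ => hζ.resolve_right hζ0⟩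
  have hpullback : ∀ᶠ η in 𝓝[≠] 0, η ^ 2 * schwarzian (fun η' => z (η' ^ n)) η =
      n ^ 2 * ((η ^ n) ^ 2 * schwarzian z (η ^ n)) + (1 - n ^ 2) := by
    filter_upwards [hU, self_mem_nhdsWithin] with η hηU (hη : η ≠ 0)
    have hnear := hUopen.eventually_mem hηU
    exact sq_mul_schwarzian_comp_pow hn0 hη (hnear.mono hz1) (hnear.mono hz2) (hz3 _ hηU)
      (hz' _ hηU)
  rw [show 1 - (n : ℂ) ^ 2 * (1 - α) = n ^ 2 * α + (1 - n ^ 2) by ring]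
  exact (((hlim.comp (tendsto_pow_nhdsNE_zero hn0)).const_mul _).add_const _).congr'
    (hpullback.mono fun _ h => h.symm)
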